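/- For d = 3, the function I satisfies lim_{λ→0+} (I(0) − I(λ))/√λ = 1/(4π); that is, I(λ) = I(0) − √λ/(4π) + o(√λ) as λ → 0+. -/

import Mathlib

open MeasureTheory Real Filter
open scoped ENNReal

noncomputable section

/-- The Fourier symbol `Φ(φ) = 2 ∑_j (1 - cos φ_j)` of the negative discrete Laplacian on `ℤ^d`. -/
def Phi (d : ℕ) (φ : Fin d → ℝ) : ℝ := 2 * ∑ j, (1 - Real.cos (φ j))

/-- The cube `[-π, π]^d`. -/
def cube (d : ℕ) : Set (Fin d → ℝ) := Set.univ.pi fun _ => Set.Icc (-π) π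

/-- `I(λ) = (2π)^{-d} ∫_{[-π,π]^d} (λ + Φ(φ))⁻¹ dφ` (Bochner integral, real-valued). -/
def Ir (d : ℕ) (lam : ℝ) : ℝ := ((2 * π) ^ d)⁻¹ * ∫ φ in cube d, (lam + Phi d φ)⁻¹

open Set Metric Topology

/-!
Write `λ = t²`. On the cube, `Φ⁻¹ - (t² + Φ)⁻¹ = t⁻² g(Φ / t²)` with `g b = (b (1 + b))⁻¹`, and the
substitution `φ = t ψ` gives `I(0) - I(t²) = (2π)⁻³ t ∫ 1_{cube}(t ψ) g(Φ(t ψ) / t²) dψ`.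
Since `2 (1 - cos x) = x² sinc(x / 2)²`, `Φ(t ψ) / t² → |ψ|²` as `t → 0`, while on the cube
`Φ(φ) ≥ 4 |φ|² / π²` (Jordan's inequality) yields the integrable majorant `g(4 |ψ|² / π²)`.
Dominated convergence and polar coordinates give the limit
`(2π)⁻³ ∫_{ℝ³} g(|ψ|²) dψ = (2π)⁻³ · 4π ∫₀^∞ (1 + r²)⁻¹ dr = 2π² / (2π)³ = 1 / (4π)`.
-/

theorem sin_eq_mul_sinc (x : ℝ) : sin x = x * sinc x := by
  rcases eq_or_ne x 0 with rfl | hx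
  · simp
  · rw [sinc_of_ne_zero hx, mul_div_cancel₀ _ hx]

section Symbol

variable {d : ℕ}

theorem Phi_nonneg (φ : Fin d → ℝ) : 0 ≤ Phi d φ :=
  mul_nonneg zero_le_two (Finset.sum_nonneg fun _ _ => sub_nonneg.2 (cos_le_one _))

theorem continuous_Phi : Continuous (Phi d) := by
  unfold Phi; fun_prop

theorem measurableSet_cube : MeasurableSet (cube d) :=
  MeasurableSet.univ_pi fun _ => measurableSet_Icc

theorem mul_sum_sq_le_Phi {φ : Fin d → ℝ} (hφ : φ ∈ cube d) :
    4 / π ^ 2 * ∑ j, φ j ^ 2 ≤ Phi d φ := by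
  rw [Phi, Finset.mul_sum, Finset.mul_sum]
  refine Finset.sum_le_sum fun j _ => ?_
  have hj := hφ j (mem_univ j)
  have := cos_le_one_sub_mul_cos_sq (abs_le.2 hj)
  linarith [show 4 / π ^ 2 * φ j ^ 2 = 2 * (2 / π ^ 2 * φ j ^ 2) by ring]

theorem Phi_smul (t : ℝ) (ψ : Fin d → ℝ) :
    Phi d (t • ψ) = t ^ 2 * ∑ j, (ψ j * sinc (t * ψ j / 2)) ^ 2 := by
  have half_angle (x : ℝ) : 1 - cos x = 2 * sin (x / 2) ^ 2 := by
    nth_rw 1 [← mul_div_cancel₀ x two_ne_zero, cos_two_mul', ← sin_sq_add_cos_sq (x / 2)]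
    ring
  simp only [Phi, Pi.smul_apply, smul_eq_mul, half_angle, sin_eq_mul_sinc, Finset.mul_sum]
  exact Finset.sum_congr rfl fun _ _ => by ring

theorem tendsto_Phi_smul_div_sq (ψ : Fin d → ℝ) :
    Tendsto (fun t => Phi d (t • ψ) / t ^ 2) (𝓝[≠] 0) (𝓝 (∑ j, ψ j ^ 2)) := by
  have hcont : Continuous fun t : ℝ => ∑ j, (ψ j * sinc (t * ψ j / 2)) ^ 2 := by
    fun_prop
  have hlim := hcont.tendsto 0
  simp only [zero_mul, zero_div, sinc_zero, mul_one] at hlim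
  refine (hlim.mono_left nhdsWithin_le_nhds).congr' ?_
  filter_upwards [self_mem_nhdsWithin] with t ht
  rw [Phi_smul, mul_div_cancel_left₀ _ (pow_ne_zero 2 ht)]

end Symbol

theorem sum_sq_pos {d : ℕ} {ψ : Fin d → ℝ} (hψ : ψ ≠ 0) : 0 < ∑ j, ψ j ^ 2 := by
  obtain ⟨j, hj⟩ := Function.ne_iff.1 hψ
  exact Finset.sum_pos' (fun _ _ => sq_nonneg _) ⟨j, Finset.mem_univ j, pow_two_pos_of_ne_zero hj⟩

theorem ae_ne_zero {d : ℕ} [NeZero d] : ∀ᵐ ψ : Fin d → ℝ, ψ ≠ 0 :=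
  compl_mem_ae_iff.2 (measure_singleton 0)

section Radial

variable {d : ℕ} [NeZero d]

theorem integrable_comp_sum_sq_iff {f : ℝ → ℝ} :
    Integrable (fun ψ : Fin d → ℝ => f (∑ j, ψ j ^ 2)) ↔
      IntegrableOn (fun r : ℝ => r ^ (d - 1) * f (r ^ 2)) (Ioi 0) := by
  rw [← (PiLp.volume_preserving_ofLp (Fin d)).integrable_comp_emb
    (MeasurableEquiv.toLp 2 (Fin d → ℝ)).symm.measurableEmbedding]
  have h := integrable_fun_norm_addHaar (volume : Measure (EuclideanSpace ℝ (Fin d)))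
    (f := fun r => f (r ^ 2))
  simp_rw [EuclideanSpace.real_norm_sq_eq, smul_eq_mul, finrank_euclideanSpace_fin] at h
  exact h

theorem integral_comp_sum_sq (f : ℝ → ℝ) :
    ∫ ψ : Fin d → ℝ, f (∑ j, ψ j ^ 2) =
      d * volume.real (ball (0 : EuclideanSpace ℝ (Fin d)) 1) *
        ∫ r in Ioi 0, r ^ (d - 1) * f (r ^ 2) := by
  rw [← (PiLp.volume_preserving_ofLp (Fin d)).integral_comp
    (MeasurableEquiv.toLp 2 (Fin d → ℝ)).symm.measurableEmbedding]
  have h := integral_fun_norm_addHaar (volume : Measure (EuclideanSpace ℝ (Fin d)))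
    (fun r => f (r ^ 2))
  simp_rw [EuclideanSpace.real_norm_sq_eq, smul_eq_mul, nsmul_eq_mul, ← mul_assoc,
    finrank_euclideanSpace_fin] at h
  exact h

end Radial

/-- `b⁻¹ - (1 + b)⁻¹` for `b ≠ 0`; as a single inverse it is `0`, not junk, at `b = 0`. -/
def resolventGap (b : ℝ) : ℝ := (b * (1 + b))⁻¹

theorem resolventGap_nonneg {b : ℝ} (hb : 0 ≤ b) : 0 ≤ resolventGap b := by
  unfold resolventGap; positivity

theorem resolventGap_antitoneOn : AntitoneOn resolventGap (Ioi 0) := by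
  intro a (ha : 0 < a) b (hb : 0 < b) hab
  unfold resolventGap
  gcongr

theorem continuousAt_resolventGap {b : ℝ} (hb : 0 < b) : ContinuousAt resolventGap b := by
  unfold resolventGap
  exact (continuousAt_id.mul (continuousAt_id.const_add 1)).inv₀ (by dsimp; positivity)

theorem measurable_resolventGap : Measurable resolventGap := by
  unfold resolventGap; fun_prop

theorem inv_sub_inv_add_eq_resolventGap {s t : ℝ} (hs : 0 < s) (ht : t ≠ 0) :
    s⁻¹ - (t ^ 2 + s)⁻¹ = (t ^ 2)⁻¹ * resolventGap (s / t ^ 2) := by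
  unfold resolventGap
  field_simp
  ring

theorem integrable_inv_sum_sq_mul_exp {d : ℕ} (hd : 3 ≤ d) :
    Integrable (fun ψ : Fin d → ℝ => (∑ j, ψ j ^ 2)⁻¹ * exp (-∑ j, ψ j ^ 2)) := by
  have : NeZero d := ⟨by omega⟩
  rw [integrable_comp_sum_sq_iff (f := fun s => s⁻¹ * exp (-s))]
  have hexp : -1 < (d : ℝ) - 3 := by
    have : (3 : ℝ) ≤ d := by exact_mod_cast hd
    linarith
  refine (integrableOn_rpow_mul_exp_neg_mul_sq zero_lt_one hexp).congr_fun
    (fun r (hr : 0 < r) => ?_) measurableSet_Ioi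
  have hpow : r ^ ((d : ℝ) - 3) * r ^ 2 = r ^ (d - 1) := by
    rw [← rpow_natCast, ← rpow_natCast, ← rpow_add hr]
    congr 1
    push_cast [show 1 ≤ d by omega]
    ring
  rw [← hpow]
  field_simp

/-- On the cube `|φ|² ≤ d π²`, so inserting the factor `exp (-|φ|²)` into the majorant
`(π² / 4) |φ|⁻²` costs only a constant and makes it integrable at infinity. -/
theorem integrableOn_inv_add_Phi {d : ℕ} (hd : 3 ≤ d) {lam : ℝ} (hlam : 0 ≤ lam) :
    IntegrableOn (fun φ => (lam + Phi d φ)⁻¹) (cube d) := by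
  have : NeZero d := ⟨by omega⟩
  refine ((integrable_inv_sum_sq_mul_exp hd).const_mul
    (π ^ 2 / 4 * exp (d * π ^ 2))).integrableOn.mono'
    ((measurable_const.add continuous_Phi.measurable).inv.aestronglyMeasurable) ?_
  rw [ae_restrict_iff' measurableSet_cube]
  filter_upwards [ae_ne_zero] with φ hφ hcube
  have hs := sum_sq_pos hφ
  have hs_le : ∑ j, φ j ^ 2 ≤ d * π ^ 2 := by
    calc ∑ j, φ j ^ 2 ≤ ∑ _j : Fin d, π ^ 2 :=
          Finset.sum_le_sum fun j _ => sq_le_sq' (hcube j (mem_univ j)).1 (hcube j (mem_univ j)).2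
      _ = d * π ^ 2 := by simp
  have hlow : 4 / π ^ 2 * ∑ j, φ j ^ 2 ≤ lam + Phi d φ := by
    linarith [mul_sum_sq_le_Phi hcube]
  have hpos : 0 < 4 / π ^ 2 * ∑ j, φ j ^ 2 := by positivity
  rw [norm_inv, Real.norm_of_nonneg (hpos.le.trans hlow)]
  calc (lam + Phi d φ)⁻¹ ≤ (4 / π ^ 2 * ∑ j, φ j ^ 2)⁻¹ := inv_anti₀ hpos hlow
    _ = π ^ 2 / 4 * exp (d * π ^ 2) * ((∑ j, φ j ^ 2)⁻¹ * exp (-(d * π ^ 2))) := by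
        rw [exp_neg]; field_simp
    _ ≤ π ^ 2 / 4 * exp (d * π ^ 2) * ((∑ j, φ j ^ 2)⁻¹ * exp (-∑ j, φ j ^ 2)) := by
        gcongr

section Rescaling

variable {d : ℕ}

/-- The integrand of `I(0) - I(t²)` after the substitution `φ = t ψ`. -/
def rescaledGap (d : ℕ) (t : ℝ) (ψ : Fin d → ℝ) : ℝ :=
  (cube d).indicator (fun φ => resolventGap (Phi d φ / t ^ 2)) (t • ψ)

theorem measurable_rescaledGap (t : ℝ) : Measurable (rescaledGap d t) :=
  ((measurable_resolventGap.comp (continuous_Phi.measurable.div_const _)).indicator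
    measurableSet_cube).comp (measurable_const_smul t)

theorem rescaledGap_nonneg (t : ℝ) (ψ : Fin d → ℝ) : 0 ≤ rescaledGap d t ψ :=
  indicator_nonneg (fun _ _ => resolventGap_nonneg (div_nonneg (Phi_nonneg _) (sq_nonneg t))) _

theorem rescaledGap_le {t : ℝ} (ht : t ≠ 0) {ψ : Fin d → ℝ} (hψ : ψ ≠ 0) :
    rescaledGap d t ψ ≤ resolventGap (4 / π ^ 2 * ∑ j, ψ j ^ 2) := by
  have hpos : 0 < 4 / π ^ 2 * ∑ j, ψ j ^ 2 := by have := sum_sq_pos hψ; positivity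
  by_cases hcube : t • ψ ∈ cube d
  · rw [rescaledGap, indicator_of_mem hcube]
    have hlow : 4 / π ^ 2 * ∑ j, ψ j ^ 2 ≤ Phi d (t • ψ) / t ^ 2 := by
      rw [le_div_iff₀ (pow_two_pos_of_ne_zero ht)]
      calc (4 / π ^ 2 * ∑ j, ψ j ^ 2) * t ^ 2 = 4 / π ^ 2 * ∑ j, (t • ψ) j ^ 2 := by
            simp only [Pi.smul_apply, smul_eq_mul, mul_pow, ← Finset.mul_sum]; ring
        _ ≤ Phi d (t • ψ) := mul_sum_sq_le_Phi hcube
    exact resolventGap_antitoneOn hpos (hpos.trans_le hlow) hlow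
  · rw [rescaledGap, indicator_of_notMem hcube]
    exact resolventGap_nonneg hpos.le

theorem cube_mem_nhds_zero : cube d ∈ 𝓝 0 :=
  set_pi_mem_nhds finite_univ fun _ _ => Icc_mem_nhds (neg_lt_zero.2 pi_pos) pi_pos

theorem tendsto_rescaledGap {ψ : Fin d → ℝ} (hψ : ψ ≠ 0) :
    Tendsto (fun t => rescaledGap d t ψ) (𝓝[≠] 0) (𝓝 (resolventGap (∑ j, ψ j ^ 2))) := by
  have hsmul : Tendsto (fun t : ℝ => t • ψ) (𝓝[≠] 0) (𝓝 0) := by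
    simpa using (tendsto_id.smul_const ψ).mono_left (nhdsWithin_le_nhds (a := (0 : ℝ)))
  refine ((continuousAt_resolventGap (sum_sq_pos hψ)).tendsto.comp
    (tendsto_Phi_smul_div_sq ψ)).congr' ?_
  filter_upwards [hsmul cube_mem_nhds_zero] with t ht
  exact (indicator_of_mem ht _).symm

theorem Ir_sub_Ir_sq (hd : 3 ≤ d) {t : ℝ} (ht : 0 < t) :
    Ir d 0 - Ir d (t ^ 2) = ((2 * π) ^ d)⁻¹ * t ^ (d - 2) * ∫ ψ, rescaledGap d t ψ := by
  have : NeZero d := ⟨by omega⟩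
  have hsub : ∫ φ in cube d, ((Phi d φ)⁻¹ - (t ^ 2 + Phi d φ)⁻¹) =
      (t ^ 2)⁻¹ * ∫ φ, (cube d).indicator (fun φ => resolventGap (Phi d φ / t ^ 2)) φ := by
    rw [integral_indicator measurableSet_cube, ← integral_const_mul]
    refine setIntegral_congr_ae measurableSet_cube ?_
    filter_upwards [ae_ne_zero] with φ hφ hcube
    have hΦ : 0 < Phi d φ := by
      have := sum_sq_pos hφ
      exact lt_of_lt_of_le (by positivity) (mul_sum_sq_le_Phi hcube)
    exact inv_sub_inv_add_eq_resolventGap hΦ ht.ne'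
  have hscale : ∫ ψ, rescaledGap d t ψ =
      (t ^ d)⁻¹ * ∫ φ, (cube d).indicator (fun φ => resolventGap (Phi d φ / t ^ 2)) φ := by
    simp only [rescaledGap]
    rw [Measure.integral_comp_smul, Module.finrank_fin_fun, abs_inv, abs_pow, abs_of_pos ht,
      smul_eq_mul]
  have hpow : t ^ d = t ^ 2 * t ^ (d - 2) := by rw [← pow_add]; congr 1; omega
  rw [Ir, Ir, ← mul_sub, ← integral_sub (integrableOn_inv_add_Phi hd le_rfl)
    (integrableOn_inv_add_Phi hd (sq_nonneg t))]
  simp only [zero_add]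
  rw [hsub, hscale, hpow]
  field_simp

end Rescaling

theorem integrable_resolventGap_sum_sq :
    Integrable (fun ψ : Fin 3 → ℝ => resolventGap (∑ j, ψ j ^ 2)) := by
  rw [integrable_comp_sum_sq_iff]
  refine integrable_inv_one_add_sq.integrableOn.congr_fun (fun r (hr : 0 < r) => ?_)
    measurableSet_Ioi
  unfold resolventGap
  field_simp

theorem integrable_resolventGap_mul_sum_sq {c : ℝ} (hc : 0 < c) :
    Integrable (fun ψ : Fin 3 → ℝ => resolventGap (c * ∑ j, ψ j ^ 2)) := by
  refine (integrable_resolventGap_sum_sq.comp_smul (sqrt_pos.2 hc).ne').congr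
    (.of_forall fun ψ => ?_)
  simp only [Pi.smul_apply, smul_eq_mul, mul_pow, sq_sqrt hc.le, ← Finset.mul_sum]

theorem integral_resolventGap_sum_sq :
    ∫ ψ : Fin 3 → ℝ, resolventGap (∑ j, ψ j ^ 2) = 2 * π ^ 2 := by
  have hradial : ∫ r in Ioi (0 : ℝ), r ^ 2 * resolventGap (r ^ 2) = π / 2 := by
    have harctan := integral_Ioi_inv_one_add_sq (i := 0)
    rw [arctan_zero, sub_zero] at harctan
    rw [← harctan]
    refine setIntegral_congr_fun measurableSet_Ioi fun r (hr : 0 < r) => ?_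
    unfold resolventGap
    field_simp
  rw [integral_comp_sum_sq, hradial, measureReal_def, EuclideanSpace.volume_ball_fin_three,
    ENNReal.ofReal_one, one_pow, one_mul, ENNReal.toReal_ofReal (by positivity)]
  push_cast
  ring

theorem tendsto_integral_rescaledGap :
    Tendsto (fun t => ∫ ψ, rescaledGap 3 t ψ) (𝓝[≠] 0) (𝓝 (2 * π ^ 2)) := by
  rw [← integral_resolventGap_sum_sq]
  refine tendsto_integral_filter_of_dominated_convergence _
    (.of_forall fun t => (measurable_rescaledGap t).aestronglyMeasurable)
    ?_ (integrable_resolventGap_mul_sum_sq (c := 4 / π ^ 2) (by positivity)) ?_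
  · filter_upwards [self_mem_nhdsWithin] with t ht
    filter_upwards [ae_ne_zero] with ψ hψ
    rw [Real.norm_of_nonneg (rescaledGap_nonneg t ψ)]
    exact rescaledGap_le ht hψ
  · filter_upwards [ae_ne_zero] with ψ hψ
    exact tendsto_rescaledGap hψ

/-- for `d = 3`, `I(λ) = I(0) - √λ/(4π) + o(√λ)` as `λ → 0+`, i.e.
`(I(0) - I(λ))/√λ → 1/(4π)`. -/
theorem I_asymptotics_dim3 :
    Tendsto (fun lam : ℝ => (Ir 3 0 - Ir 3 lam) / Real.sqrt lam)
      (nhdsWithin 0 (Set.Ioi 0)) (nhds (1 / (4 * π))) := by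
  have hsqrt : Tendsto sqrt (𝓝[>] 0) (𝓝[≠] 0) :=
    tendsto_nhdsWithin_iff.2 ⟨(continuous_sqrt.tendsto' 0 0 sqrt_zero).mono_left
      nhdsWithin_le_nhds, eventually_nhdsWithin_of_forall fun _ h => (sqrt_pos.2 h).ne'⟩
  have hlim := (tendsto_integral_rescaledGap.comp hsqrt).const_mul ((2 * π) ^ 3)⁻¹
  rw [show ((2 * π) ^ 3)⁻¹ * (2 * π ^ 2) = 1 / (4 * π) by field_simp; ring] at hlim
  refine hlim.congr' ?_
  filter_upwards [self_mem_nhdsWithin] with lam (hlam : 0 < lam)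
  have hs : 0 < √lam := sqrt_pos.2 hlam
  have key := Ir_sub_Ir_sq le_rfl hs
  rw [sq_sqrt hlam.le, show 3 - 2 = 1 from rfl, pow_one] at key
  rw [Function.comp_apply, key]
  field_simp

end
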